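/- Suppose η = −1 (put case) and the European values are strictly positive: e_k(x) > 0 for every k < n and x ∈ C. Then the stopping regions are star-shaped toward the origin in (s,z): if x = (s,y,z) ∈ S_k for some k < n and γ ∈ (0,1], then γ∘x = (γs, y, γz) ∈ S_k. -/

import Mathlib

/-! Since the kernels commute with the dilation `γ∘x = (γs, y, γz)` and `α - β` is homogeneous,
backward induction shows that the value function is sub-affine along dilations:
`v_k(γ∘x) ≤ γ v_k(x) + (1 - γ) e^{-r t_k} K` for `γ ∈ (0,1]`. For the payoff this is convexity
of `p ↦ (K - p)⁺` between `p` and `0`; as the discounted strike `e^{-r t_k} K` decreases in `k`,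
the bound passes through the expectation and the maximum. Where the payoff is positive the bound
is an equality for the payoff, and at a point of the stopping region `φ_k = v_k ≥ e_k > 0`,
hence `v_k(γ∘x) ≤ φ_k(γ∘x)`. -/

open MeasureTheory ProbabilityTheory

abbrev StateSpace (d₁ d₂ d₃ : ℕ) : Type :=
  (Fin d₁ → ℝ) × (Fin d₂ → ℝ) × (Fin d₃ → ℝ)

def growthClass {E : Type*} [TopologicalSpace E] [Norm E] (C : Set E) (a : ℝ) : Set (E → ℝ) :=
  {ψ | ContinuousOn ψ C ∧ ∃ c > 0, ∀ x ∈ C, |ψ x| ≤ c * (1 + ‖x‖ ^ a)}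

namespace growthClass

variable {E : Type*} [TopologicalSpace E] [Norm E] {C : Set E} {a : ℝ} {ψ ψ₁ ψ₂ : E → ℝ}

lemma mem_of_eqOn (hψ : ψ ∈ growthClass C a) (h : Set.EqOn ψ₁ ψ C) : ψ₁ ∈ growthClass C a := by
  obtain ⟨hcont, c, hc, hbound⟩ := hψ
  exact ⟨hcont.congr h, c, hc, fun x hx => h hx ▸ hbound x hx⟩

lemma max_mem (h₁ : ψ₁ ∈ growthClass C a) (h₂ : ψ₂ ∈ growthClass C a) :
    (fun x => max (ψ₁ x) (ψ₂ x)) ∈ growthClass C a := by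
  obtain ⟨hcont₁, c₁, hc₁, hbound₁⟩ := h₁
  obtain ⟨hcont₂, c₂, hc₂, hbound₂⟩ := h₂
  refine ⟨ContinuousOn.sup hcont₁ hcont₂, c₁ + c₂, add_pos hc₁ hc₂, fun x hx => ?_⟩
  calc |max (ψ₁ x) (ψ₂ x)| ≤ |ψ₁ x| + |ψ₂ x| :=
        abs_max_le_max_abs_abs.trans (max_le_add_of_nonneg (abs_nonneg _) (abs_nonneg _))
    _ ≤ c₁ * (1 + ‖x‖ ^ a) + c₂ * (1 + ‖x‖ ^ a) := add_le_add (hbound₁ x hx) (hbound₂ x hx)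
    _ = (c₁ + c₂) * (1 + ‖x‖ ^ a) := by ring

end growthClass

def putPayoff (D K p : ℝ) : ℝ := D * max (K - p) 0

lemma putPayoff_mul_le {D K p γ : ℝ} (hD : 0 ≤ D) (hK : 0 ≤ K) (hγ₀ : 0 ≤ γ) (hγ₁ : γ ≤ 1) :
    putPayoff D K (γ * p) ≤ γ * putPayoff D K p + (1 - γ) * (D * K) := by
  have hmax : max (K - γ * p) 0 ≤ γ * max (K - p) 0 + (1 - γ) * K := by
    apply max_le
    · nlinarith [le_max_left (K - p) 0]
    · nlinarith [le_max_right (K - p) 0]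
  calc D * max (K - γ * p) 0 ≤ D * (γ * max (K - p) 0 + (1 - γ) * K) :=
        mul_le_mul_of_nonneg_left hmax hD
    _ = γ * putPayoff D K p + (1 - γ) * (D * K) := by unfold putPayoff; ring

lemma le_putPayoff_mul_of_pos {D K p γ : ℝ} (h : 0 < putPayoff D K p) :
    γ * putPayoff D K p + (1 - γ) * (D * K) ≤ putPayoff D K (γ * p) := by
  unfold putPayoff at h ⊢
  have hD : 0 < D := pos_of_mul_pos_left h (le_max_right _ _)
  have hKp : 0 < K - p := (lt_max_iff.mp (pos_of_mul_pos_right h hD.le)).resolve_right (lt_irrefl 0)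
  have hp : max (K - p) 0 = K - p := max_eq_left hKp.le
  calc γ * (D * max (K - p) 0) + (1 - γ) * (D * K) = D * (K - γ * p) := by rw [hp]; ring
    _ ≤ D * max (K - γ * p) 0 := mul_le_mul_of_nonneg_left (le_max_left _ _) hD.le

lemma integral_le_of_map_eq {E : Type*} [MeasurableSpace E] {μ ν : Measure E}
    [IsProbabilityMeasure μ] {g : E → E} (hg : Measurable g) (hmap : μ.map g = ν)
    {f : E → ℝ} (hfμ : Integrable f μ) (hfν : Integrable f ν) {γ c : ℝ}
    (hle : ∀ᵐ y ∂μ, f (g y) ≤ γ * f y + c) :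
    ∫ y, f y ∂ν ≤ γ * ∫ y, f y ∂μ + c := by
  subst hmap
  rw [integral_map hg.aemeasurable hfν.aestronglyMeasurable]
  calc ∫ y, f (g y) ∂μ ≤ ∫ y, (γ * f y + c) ∂μ :=
        integral_mono_ae (hfν.comp_measurable hg) ((hfμ.const_mul γ).add (integrable_const c)) hle
    _ = γ * ∫ y, f y ∂μ + c := by
        rw [integral_add (hfμ.const_mul γ) (integrable_const c), integral_const_mul,
          integral_const, probReal_univ, one_smul]

section DynamicProgramming

variable {E : Type*} [MeasurableSpace E] {C : Set E} {n : ℕ} {κ : ℕ → Kernel E E}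
  {φ v e : ℕ → E → ℝ}

lemma value_mem_growthClass [TopologicalSpace E] [Norm E] {a : ℝ}
    (hφ : ∀ k ≤ n, φ k ∈ growthClass C a)
    (hκ : ∀ k < n, ∀ ψ ∈ growthClass C a, (fun x => ∫ y, ψ y ∂κ k x) ∈ growthClass C a)
    (hvn : ∀ x ∈ C, v n x = φ n x)
    (hv : ∀ k < n, ∀ x ∈ C, v k x = max (φ k x) (∫ y, v (k + 1) y ∂κ k x)) :
    ∀ k ≤ n, v k ∈ growthClass C a := by
  intro k hk
  induction hk using Nat.decreasingInduction with
  | self => exact growthClass.mem_of_eqOn (hφ n le_rfl) hvn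
  | of_succ k hk ih =>
    exact growthClass.mem_of_eqOn (growthClass.max_mem (hφ k hk.le) (hκ k hk _ ih)) (hv k hk)

lemma european_mem_growthClass [TopologicalSpace E] [Norm E] {a : ℝ}
    (hφ : φ n ∈ growthClass C a)
    (hκ : ∀ k < n, ∀ ψ ∈ growthClass C a, (fun x => ∫ y, ψ y ∂κ k x) ∈ growthClass C a)
    (hen : ∀ x ∈ C, e n x = φ n x)
    (he : ∀ k < n, ∀ x ∈ C, e k x = ∫ y, e (k + 1) y ∂κ k x) :
    ∀ k ≤ n, e k ∈ growthClass C a := by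
  intro k hk
  induction hk using Nat.decreasingInduction with
  | self => exact growthClass.mem_of_eqOn hφ hen
  | of_succ k hk ih => exact growthClass.mem_of_eqOn (hκ k hk _ ih) (he k hk)

lemma european_le_value (hκC : ∀ k < n, ∀ x ∈ C, κ k x Cᶜ = 0)
    (hvint : ∀ k < n, ∀ x ∈ C, Integrable (v (k + 1)) (κ k x))
    (heint : ∀ k < n, ∀ x ∈ C, Integrable (e (k + 1)) (κ k x))
    (hvn : ∀ x ∈ C, v n x = φ n x)
    (hv : ∀ k < n, ∀ x ∈ C, v k x = max (φ k x) (∫ y, v (k + 1) y ∂κ k x))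
    (hen : ∀ x ∈ C, e n x = φ n x)
    (he : ∀ k < n, ∀ x ∈ C, e k x = ∫ y, e (k + 1) y ∂κ k x) :
    ∀ k ≤ n, ∀ x ∈ C, e k x ≤ v k x := by
  intro k hk
  induction hk using Nat.decreasingInduction with
  | self => intro x hx; rw [hen x hx, hvn x hx]
  | of_succ k hk ih =>
    intro x hx
    rw [he k hk x hx, hv k hk x hx]
    refine le_max_of_le_right (integral_mono_ae (heint k hk x hx) (hvint k hk x hx) ?_)
    filter_upwards [measure_eq_zero_iff_ae_notMem.mp (hκC k hk x hx)] with y hy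
    exact ih y (not_not.mp hy)

lemma value_comp_le [∀ k, IsMarkovKernel (κ k)] {g : E → E} {γ : ℝ} {D : ℕ → ℝ}
    (hγ : 0 ≤ γ) (hD : ∀ k < n, D (k + 1) ≤ D k)
    (hg : Measurable g) (hgC : ∀ x ∈ C, g x ∈ C)
    (hκg : ∀ k < n, ∀ x ∈ C, (κ k x).map g = κ k (g x))
    (hκC : ∀ k < n, ∀ x ∈ C, κ k x Cᶜ = 0)
    (hvint : ∀ k < n, ∀ x ∈ C, Integrable (v (k + 1)) (κ k x))
    (hφ : ∀ k ≤ n, ∀ x ∈ C, φ k (g x) ≤ γ * φ k x + D k)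
    (hvn : ∀ x ∈ C, v n x = φ n x)
    (hv : ∀ k < n, ∀ x ∈ C, v k x = max (φ k x) (∫ y, v (k + 1) y ∂κ k x)) :
    ∀ k ≤ n, ∀ x ∈ C, v k (g x) ≤ γ * v k x + D k := by
  intro k hk
  induction hk using Nat.decreasingInduction with
  | self => intro x hx; rw [hvn x hx, hvn _ (hgC x hx)]; exact hφ n le_rfl x hx
  | of_succ k hk ih =>
    intro x hx
    have hcontinuation : ∫ y, v (k + 1) y ∂κ k (g x) ≤ γ * ∫ y, v (k + 1) y ∂κ k x + D k := by
      refine (integral_le_of_map_eq hg (hκg k hk x hx) (hvint k hk x hx)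
        (hvint k hk _ (hgC x hx)) ?_).trans (add_le_add_right (hD k hk) _)
      filter_upwards [measure_eq_zero_iff_ae_notMem.mp (hκC k hk x hx)] with y hy
      exact ih y (not_not.mp hy)
    rw [hv k hk x hx, hv k hk _ (hgC x hx), mul_max_of_nonneg _ _ hγ, ← max_add_add_right]
    exact max_le_max (hφ k hk.le x hx) hcontinuation

end DynamicProgramming

theorem stmt_6_general
    {d₁ d₂ d₃ : ℕ}
    (C : Set (StateSpace d₁ d₂ d₃))
    (scale : ℝ → StateSpace d₁ d₂ d₃ → StateSpace d₁ d₂ d₃)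
    (hscale : ∀ γ x, scale γ x = (γ • x.1, x.2.1, γ • x.2.2))
    (hC : ∀ γ > (0 : ℝ), ∀ x ∈ C, scale γ x ∈ C)
    (n : ℕ) (t : ℕ → ℝ) (ht : ∀ i < n, t i < t (i + 1))
    (a : ℝ)
    (La : Set (StateSpace d₁ d₂ d₃ → ℝ))
    (hLa : La = {ψ | ContinuousOn ψ C ∧
      ∃ c > 0, ∀ x ∈ C, |ψ x| ≤ c * (1 + ‖x‖ ^ a)})
    (α β : StateSpace d₁ d₂ d₃ → ℝ)
    (hαhom : ∀ γ > (0 : ℝ), ∀ x ∈ C, α (scale γ x) = γ * α x)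
    (hβhom : ∀ γ > (0 : ℝ), ∀ x ∈ C, β (scale γ x) = γ * β x)
    (K r η : ℝ) (hK : 0 < K) (hr : 0 ≤ r) (hη : η = -1)
    (φ : ℕ → StateSpace d₁ d₂ d₃ → ℝ)
    (hφdef : ∀ k ≤ n, ∀ x ∈ C,
      φ k x = Real.exp (-(r * t k)) * max (η * (α x - β x - K)) 0)
    (hφLa : ∀ k ≤ n, φ k ∈ La)
    (κ : ℕ → Kernel (StateSpace d₁ d₂ d₃) (StateSpace d₁ d₂ d₃))
    (hκ : ∀ k, IsMarkovKernel (κ k))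
    (hκC : ∀ k < n, ∀ x ∈ C, (κ k) x Cᶜ = 0)
    (hgc : ∀ k < n, ∀ ψ ∈ La,
      (∀ x ∈ C, Integrable ψ ((κ k) x)) ∧
      (fun x => ∫ y, ψ y ∂((κ k) x)) ∈ La)
    (hκscale : ∀ k < n, ∀ γ > (0 : ℝ), ∀ x ∈ C,
      Measure.map (scale γ) ((κ k) x) = (κ k) (scale γ x))
    (v : ℕ → StateSpace d₁ d₂ d₃ → ℝ)
    (hvn : ∀ x ∈ C, v n x = φ n x)
    (hv : ∀ k < n, ∀ x ∈ C, v k x = max (φ k x) (∫ y, v (k + 1) y ∂((κ k) x)))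
    (e : ℕ → StateSpace d₁ d₂ d₃ → ℝ)
    (hen : ∀ x ∈ C, e n x = φ n x)
    (he : ∀ k < n, ∀ x ∈ C, e k x = ∫ y, e (k + 1) y ∂((κ k) x))
    (hepos : ∀ k < n, ∀ x ∈ C, 0 < e k x)
    (S : ℕ → Set (StateSpace d₁ d₂ d₃))
    (hS : ∀ k, S k = {x | x ∈ C ∧ v k x = φ k x}) :
    ∀ k < n, ∀ x ∈ S k, ∀ γ : ℝ, 0 < γ → γ ≤ 1 → scale γ x ∈ S k := by
  have hLa' : La = growthClass C a := hLa
  subst hLa' hη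
  have := hκ
  have hvL := value_mem_growthClass hφLa (fun k hk ψ hψ => (hgc k hk ψ hψ).2) hvn hv
  have heL := european_mem_growthClass (hφLa n le_rfl) (fun k hk ψ hψ => (hgc k hk ψ hψ).2) hen he
  have hvint k hk := (hgc k hk _ (hvL (k + 1) hk)).1
  have heint k hk := (hgc k hk _ (heL (k + 1) hk)).1
  have hev := european_le_value hκC hvint heint hvn hv hen he
  have hφput : ∀ k ≤ n, ∀ x ∈ C, φ k x = putPayoff (Real.exp (-(r * t k))) K (α x - β x) := by
    intro k hk x hx
    rw [hφdef k hk x hx, putPayoff, neg_one_mul, neg_sub, sub_sub_eq_add_sub, add_sub_assoc]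
  intro k hk x hxS γ hγ₀ hγ₁
  have hφscale : ∀ k ≤ n, ∀ x ∈ C,
      φ k (scale γ x) = putPayoff (Real.exp (-(r * t k))) K (γ * (α x - β x)) := by
    intro k hk x hx
    rw [hφput k hk _ (hC γ hγ₀ x hx), hαhom γ hγ₀ x hx, hβhom γ hγ₀ x hx, mul_sub]
  have hscale_meas : Measurable (scale γ) := by rw [funext (hscale γ)]; fun_prop
  have hvscale := value_comp_le (D := fun k => (1 - γ) * (Real.exp (-(r * t k)) * K))
    hγ₀.le (fun k hk => by gcongr; exact (ht k hk).le) hscale_meas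
    (hC γ hγ₀) (fun k hk => hκscale k hk γ hγ₀) hκC hvint
    (fun k hk x hx => hφscale k hk x hx ▸ hφput k hk x hx ▸
      putPayoff_mul_le (Real.exp_pos _).le hK.le hγ₀.le hγ₁) hvn hv
  rw [hS] at hxS ⊢
  obtain ⟨hxC, hvφ⟩ := hxS
  have hφpos : 0 < φ k x := hvφ ▸ (hepos k hk x hxC).trans_le (hev k hk.le x hxC)
  refine ⟨hC γ hγ₀ x hxC, le_antisymm ?_ ?_⟩
  · calc v k (scale γ x) ≤ γ * φ k x + (1 - γ) * (Real.exp (-(r * t k)) * K) :=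
          hvφ ▸ hvscale k hk.le x hxC
      _ ≤ φ k (scale γ x) := by
          rw [hφput k hk.le x hxC] at hφpos ⊢
          rw [hφscale k hk.le x hxC]
          exact le_putPayoff_mul_of_pos hφpos
  · exact (hv k hk _ (hC γ hγ₀ x hxC)).symm ▸ le_max_left _ _

/-- Put case (`η = −1`): suppose the European values are strictly
positive, `e_k(x) > 0` for every `k < n` and `x ∈ C`, where `e_n = φ(n,·)` and
`e_k(x) = ∫ e_{k+1} dκ_k(x)`.  Then the stopping regions
`S_k = {x ∈ C : v_k(x) = φ(k,x)}` are star-shaped toward the origin in `(s,z)`: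
if `x = (s,y,z) ∈ S_k` for some `k < n` and `γ ∈ (0,1]`, then
`γ∘x = (γs, y, γz) ∈ S_k`. -/
theorem stmt_6
    {d₁ d₂ d₃ : ℕ}
    (C : Set (StateSpace d₁ d₂ d₃)) (hCmeas : MeasurableSet C)
    (scale : ℝ → StateSpace d₁ d₂ d₃ → StateSpace d₁ d₂ d₃)
    (hscale : ∀ γ x, scale γ x = (γ • x.1, x.2.1, γ • x.2.2))
    (hC : ∀ γ > (0 : ℝ), ∀ x ∈ C, scale γ x ∈ C)
    (n : ℕ) (hn : 1 ≤ n) (t : ℕ → ℝ) (ht : ∀ i < n, t i < t (i + 1))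
    (a : ℝ) (ha : 0 < a)
    (La : Set (StateSpace d₁ d₂ d₃ → ℝ))
    (hLa : La = {ψ | ContinuousOn ψ C ∧
      ∃ c > 0, ∀ x ∈ C, |ψ x| ≤ c * (1 + ‖x‖ ^ a)})
    (α β : StateSpace d₁ d₂ d₃ → ℝ)
    (hαc : ContinuousOn α C) (hαpos : ∀ x ∈ C, 0 < α x)
    (hαhom : ∀ γ > (0 : ℝ), ∀ x ∈ C, α (scale γ x) = γ * α x)
    (hβc : ContinuousOn β C) (hβnn : ∀ x ∈ C, 0 ≤ β x)
    (hβhom : ∀ γ > (0 : ℝ), ∀ x ∈ C, β (scale γ x) = γ * β x)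
    (K r η : ℝ) (hK : 0 < K) (hr : 0 ≤ r) (hη : η = -1)
    (φ : ℕ → StateSpace d₁ d₂ d₃ → ℝ)
    (hφdef : ∀ k ≤ n, ∀ x ∈ C,
      φ k x = Real.exp (-(r * t k)) * max (η * (α x - β x - K)) 0)
    (hφLa : ∀ k ≤ n, φ k ∈ La)
    (κ : ℕ → Kernel (StateSpace d₁ d₂ d₃) (StateSpace d₁ d₂ d₃))
    (hκ : ∀ k, IsMarkovKernel (κ k))
    (hκC : ∀ k < n, ∀ x ∈ C, (κ k) x Cᶜ = 0)
    (hgc : ∀ k < n, ∀ ψ ∈ La,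
      (∀ x ∈ C, Integrable ψ ((κ k) x)) ∧
      (fun x => ∫ y, ψ y ∂((κ k) x)) ∈ La)
    (hκscale : ∀ k < n, ∀ γ > (0 : ℝ), ∀ x ∈ C,
      Measure.map (scale γ) ((κ k) x) = (κ k) (scale γ x))
    (v : ℕ → StateSpace d₁ d₂ d₃ → ℝ)
    (hvn : ∀ x ∈ C, v n x = φ n x)
    (hv : ∀ k < n, ∀ x ∈ C, v k x = max (φ k x) (∫ y, v (k + 1) y ∂((κ k) x)))
    (e : ℕ → StateSpace d₁ d₂ d₃ → ℝ)
    (hen : ∀ x ∈ C, e n x = φ n x)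
    (he : ∀ k < n, ∀ x ∈ C, e k x = ∫ y, e (k + 1) y ∂((κ k) x))
    (hepos : ∀ k < n, ∀ x ∈ C, 0 < e k x)
    (S : ℕ → Set (StateSpace d₁ d₂ d₃))
    (hS : ∀ k, S k = {x | x ∈ C ∧ v k x = φ k x}) :
    ∀ k < n, ∀ x ∈ S k, ∀ γ : ℝ, 0 < γ → γ ≤ 1 → scale γ x ∈ S k :=
  stmt_6_general C scale hscale hC n t ht a La hLa α β hαhom hβhom K r η hK hr hη φ hφdef hφLa κ hκ
    hκC hgc hκscale v hvn hv e hen he hepos S hS
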